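/- Fix r ∈ ℝ with r ≠ 0, β > 0, ϑ > 0. Let μ be the measure on ℝ² (coordinates (x, θ)) whose density with respect to two-dimensional Lebesgue measure is p(x, θ) = (2πθ)^(−1/2) · exp(−x²/(2θ)) · gg(θ; r, β, ϑ) for θ > 0 and 0 for θ ≤ 0 (the joint SBL prior of one component x with conditional law N(0, θ) and hyper-parameter θ ~ GG(r, β, ϑ)). Define the Knothe–Rosenblatt map s(x, θ) = (s^θ(θ), x/√θ) for θ > 0 (and arbitrarily, e.g. (0,0), for θ ≤ 0, a μ-null set), where s^θ = Φ⁻ ∘ F with F the CDF of GG(r, β, ϑ), Φ the CDF of N(0, 1), and Φ⁻ = Function.invFun Φ. Then the pushforward of μ under s equals the two-dimensional standard normal distribution, i.e., the measure on ℝ² with density (2π)^(−1) · exp(−(τ² + u²)/2). -/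

import Mathlib

open MeasureTheory Real Set ProbabilityTheory

/-- The generalized gamma density `gg(θ; r, β, ϑ)`. -/
noncomputable def ggPdf (r β ϑ : ℝ) (θ : ℝ) : ℝ :=
  if 0 < θ then
    (|r| / (Real.Gamma β * ϑ ^ (r * β))) * θ ^ (r * β - 1) * Real.exp (-(θ / ϑ) ^ r)
  else 0

/-- The joint SBL prior density `p(x, θ) = N(x | 0, θ) · gg(θ; r, β, ϑ)`. -/
noncomputable def sblPdf (r β ϑ : ℝ) (x θ : ℝ) : ℝ :=
  if 0 < θ then
    (2 * π * θ) ^ (-(1 / 2 : ℝ)) * Real.exp (-x ^ 2 / (2 * θ)) * ggPdf r β ϑ θ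
  else 0

/-- The CDF of a measure on `ℝ`, as a real-valued function. -/
noncomputable def cdfFn (ν : Measure ℝ) (x : ℝ) : ℝ :=
  (ν (Set.Iic x)).toReal

/-!
Under `μ`, `θ ~ GG(r, β, ϑ)` and, given `θ`, `x ~ N(0, θ)`; hence `x / √θ ~ N(0, 1)`
whatever `θ` is, and `s♯μ` is the product of `N(0, 1)` with the law of `s^θ(θ)`. The CDF `F`
of `GG(r, β, ϑ)` is continuous and strictly increasing on `(0, ∞)`, which carries all the
mass, so if `F θ₀ = Φ t` then the event `Φ⁻(F θ) ≤ t` is a.s. the event `θ ≤ θ₀`, whose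
probability is `F θ₀ = Φ t`.
-/

open Filter

open scoped ENNReal NNReal

theorem Function.invFun_eq_extend {α β : Type*} [Nonempty α] (f : α → β) :
    Function.invFun f = Function.extend f id (fun _ => Classical.arbitrary α) := by
  classical
  funext b
  rw [Function.extend_def, Function.invFun]
  rfl

theorem MeasurableEmbedding.measurable_function_invFun {α β : Type*} [MeasurableSpace α]
    [MeasurableSpace β] [Nonempty α] {f : α → β} (hf : MeasurableEmbedding f) :
    Measurable (Function.invFun f) := by
  rw [Function.invFun_eq_extend]
  exact hf.measurable_extend measurable_id measurable_const

section CumulativeDistribution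

lemma ae_gt_of_measure_Iic_eq_zero {ν : Measure ℝ} {a : ℝ} (h : ν (Iic a) = 0) :
    ∀ᵐ θ ∂ν, a < θ :=
  ae_iff.2 (measure_mono_null (fun _ => le_of_not_gt) h)

lemma cdfFn_eq_cdf (ν : Measure ℝ) [IsProbabilityMeasure ν] : cdfFn ν = cdf ν :=
  funext fun x => (cdf_eq_real ν x).symm

lemma measure_Iic_eq_ofReal_cdfFn (ν : Measure ℝ) [IsProbabilityMeasure ν] (x : ℝ) :
    ν (Iic x) = ENNReal.ofReal (cdfFn ν x) := by
  rw [cdfFn_eq_cdf, ofReal_cdf]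

lemma cdfFn_le_one (ν : Measure ℝ) [IsProbabilityMeasure ν] (x : ℝ) : cdfFn ν x ≤ 1 := by
  simpa [cdfFn_eq_cdf] using cdf_le_one ν x

variable {ν ρ : Measure ℝ}

lemma measurable_invFun_cdfFn (hc : Continuous (cdfFn ρ)) (hm : StrictMono (cdfFn ρ)) :
    Measurable (Function.invFun (cdfFn ρ)) :=
  (hc.measurableEmbedding hm.injective).measurable_function_invFun

lemma range_cdfFn_of_strictMono [IsProbabilityMeasure ρ] (hc : Continuous (cdfFn ρ))
    (hm : StrictMono (cdfFn ρ)) : range (cdfFn ρ) = Ioo 0 1 := by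
  rw [cdfFn_eq_cdf] at hc hm ⊢
  apply Subset.antisymm
  · rintro _ ⟨t, rfl⟩
    exact ⟨(cdf_nonneg ρ (t - 1)).trans_lt (hm (by linarith)),
      (hm (lt_add_one t)).trans_le (cdf_le_one ρ _)⟩
  · rintro y ⟨hy0, hy1⟩
    exact mem_range_of_exists_le_of_exists_ge hc
      ((tendsto_cdf_atBot ρ).eventually (eventually_le_nhds hy0)).exists
      ((tendsto_cdf_atTop ρ).eventually (eventually_ge_nhds hy1)).exists

lemma invFun_cdfFn_le_iff [IsProbabilityMeasure ρ] (hc : Continuous (cdfFn ρ))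
    (hm : StrictMono (cdfFn ρ)) {y : ℝ} (hy : y ∈ Ioo 0 1) (t : ℝ) :
    Function.invFun (cdfFn ρ) y ≤ t ↔ y ≤ cdfFn ρ t := by
  rw [← hm.le_iff_le,
    Function.invFun_eq (f := cdfFn ρ) (by rwa [← mem_range, range_cdfFn_of_strictMono hc hm])]

theorem map_invFun_cdfFn_comp_cdfFn [IsProbabilityMeasure ν] [IsProbabilityMeasure ρ] {a : ℝ}
    (hνa : ν (Iic a) = 0) (hF : Continuous (cdfFn ν)) (hFm : StrictMonoOn (cdfFn ν) (Ici a))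
    (hΦ : Continuous (cdfFn ρ)) (hΦm : StrictMono (cdfFn ρ)) :
    ν.map (Function.invFun (cdfFn ρ) ∘ cdfFn ν) = ρ := by
  set F := cdfFn ν
  have hFa : F a = 0 := by simp [F, cdfFn, hνa]
  have hFmem : ∀ θ, a < θ → F θ ∈ Ioo 0 1 := fun θ hθ =>
    ⟨hFa ▸ hFm self_mem_Ici hθ.le hθ,
      (hFm hθ.le (mem_Ici.2 (by linarith)) (lt_add_one θ)).trans_le (cdfFn_le_one ν _)⟩
  have hmeas : Measurable (Function.invFun (cdfFn ρ) ∘ F) :=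
    (measurable_invFun_cdfFn hΦ hΦm).comp hF.measurable
  have := Measure.isProbabilityMeasure_map (μ := ν) hmeas.aemeasurable
  refine Measure.ext_of_Iic _ _ fun t => ?_
  have hΦt : cdfFn ρ t ∈ Ioo 0 1 := range_cdfFn_of_strictMono hΦ hΦm ▸ mem_range_self t
  obtain ⟨M, hM, haM⟩ := (((cdfFn_eq_cdf ν ▸ tendsto_cdf_atTop ν).eventually
    (eventually_gt_nhds hΦt.2)).and (eventually_ge_atTop a)).exists
  obtain ⟨θ₀, ⟨haθ₀, -⟩, hθ₀⟩ := intermediate_value_Ioo haM hF.continuousOn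
    (show cdfFn ρ t ∈ Ioo (F a) (F M) from ⟨hFa ▸ hΦt.1, hM⟩)
  calc ν.map (Function.invFun (cdfFn ρ) ∘ F) (Iic t)
      = ν (Iic θ₀) := by
        rw [Measure.map_apply hmeas measurableSet_Iic]
        refine measure_congr ((ae_gt_of_measure_Iic_eq_zero hνa).mono fun θ hθ => propext ?_)
        change Function.invFun (cdfFn ρ) (F θ) ≤ t ↔ θ ≤ θ₀
        rw [invFun_cdfFn_le_iff hΦ hΦm (hFmem θ hθ), ← hθ₀, hFm.le_iff_le hθ.le haθ₀.le]
    _ = ρ (Iic t) := by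
        rw [measure_Iic_eq_ofReal_cdfFn, measure_Iic_eq_ofReal_cdfFn]
        exact congrArg _ hθ₀

end CumulativeDistribution

section Density

variable {f : ℝ → ℝ}

lemma cdfFn_withDensity_ofReal (hf : Integrable f) (hf0 : 0 ≤ f) (x : ℝ) :
    cdfFn (volume.withDensity fun t => ENNReal.ofReal (f t)) x = ∫ t in Iic x, f t := by
  rw [cdfFn, withDensity_apply _ measurableSet_Iic,
    ← ofReal_integral_eq_lintegral_ofReal hf.integrableOn (ae_of_all _ hf0),
    ENNReal.toReal_ofReal (setIntegral_nonneg measurableSet_Iic fun t _ => hf0 t)]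

lemma continuous_cdfFn_withDensity_ofReal (hf : Integrable f) (hf0 : 0 ≤ f) :
    Continuous (cdfFn (volume.withDensity fun t => ENNReal.ofReal (f t))) := by
  have h : cdfFn (volume.withDensity fun t => ENNReal.ofReal (f t))
      = fun x => (∫ t in Iic 0, f t) + ∫ t in 0..x, f t := by
    funext x
    rw [cdfFn_withDensity_ofReal hf hf0, ← intervalIntegral.integral_Iic_sub_Iic
      hf.integrableOn hf.integrableOn]
    ring
  rw [h]
  exact continuous_const.add (hf.continuous_primitive 0)

lemma cdfFn_withDensity_ofReal_lt (hf : Integrable f) (hf0 : 0 ≤ f) {a b : ℝ} (hab : a < b)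
    (hpos : ∀ x ∈ Ioo a b, 0 < f x) :
    cdfFn (volume.withDensity fun t => ENNReal.ofReal (f t)) a
      < cdfFn (volume.withDensity fun t => ENNReal.ofReal (f t)) b := by
  rw [cdfFn_withDensity_ofReal hf hf0, cdfFn_withDensity_ofReal hf hf0, ← sub_pos,
    intervalIntegral.integral_Iic_sub_Iic hf.integrableOn hf.integrableOn]
  exact intervalIntegral.intervalIntegral_pos_of_pos_on hf.intervalIntegrable hpos hab

end Density

section Gaussian

variable {m : ℝ} {v : ℝ≥0}

lemma continuous_cdfFn_gaussianReal (hv : v ≠ 0) : Continuous (cdfFn (gaussianReal m v)) := by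
  rw [gaussianReal_of_var_ne_zero m hv]
  exact continuous_cdfFn_withDensity_ofReal (integrable_gaussianPDFReal m v)
    (gaussianPDFReal_nonneg m v)

lemma strictMono_cdfFn_gaussianReal (hv : v ≠ 0) : StrictMono (cdfFn (gaussianReal m v)) := by
  intro a b hab
  rw [gaussianReal_of_var_ne_zero m hv]
  exact cdfFn_withDensity_ofReal_lt (integrable_gaussianPDFReal m v)
    (gaussianPDFReal_nonneg m v) hab fun x _ => gaussianPDFReal_pos m v x hv

lemma lintegral_gaussianReal_comp_div_sqrt {θ : ℝ} (hθ : 0 < θ) {g : ℝ → ℝ≥0∞}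
    (hg : Measurable g) :
    ∫⁻ x, g (x / √θ) ∂gaussianReal 0 θ.toNNReal = ∫⁻ u, g u ∂gaussianReal 0 1 := by
  rw [← lintegral_map hg (measurable_div_const _), gaussianReal_map_div_const, zero_div]
  congr
  ext
  simp [Real.sq_sqrt hθ.le, hθ.le, hθ.ne']

lemma gaussianReal_prod_gaussianReal :
    (gaussianReal 0 1).prod (gaussianReal 0 1)
      = volume.withDensity fun q : ℝ × ℝ =>
          ENNReal.ofReal ((2 * π)⁻¹ * exp (-(q.1 ^ 2 + q.2 ^ 2) / 2)) := by
  rw [gaussianReal_of_var_ne_zero 0 one_ne_zero,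
    prod_withDensity (measurable_gaussianPDF 0 1) (measurable_gaussianPDF 0 1),
    ← Measure.volume_eq_prod]
  congr
  funext q
  rw [gaussianPDF, gaussianPDF, ← ENNReal.ofReal_mul (gaussianPDFReal_nonneg 0 1 _)]
  congr 1
  simp only [gaussianPDFReal, NNReal.coe_one, sub_zero, mul_one]
  rw [mul_mul_mul_comm, ← mul_inv, Real.mul_self_sqrt (by positivity), ← Real.exp_add]
  ring_nf

end Gaussian

section GeneralizedGamma

variable {r β ϑ : ℝ}

theorem integral_rpow_mul_exp_neg_div_rpow (hr : r ≠ 0) (hβ : 0 < β) (hϑ : 0 < ϑ) :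
    ∫ θ in Ioi 0, θ ^ (r * β - 1) * exp (-(θ / ϑ) ^ r) = ϑ ^ (r * β) * Gamma β / |r| := by
  have hsubst : ∀ θ ∈ Ioi (0 : ℝ),
      (|r| * θ ^ (r - 1)) • ((θ ^ r) ^ (β - 1) * exp (-((ϑ ^ r)⁻¹ * θ ^ r)))
        = |r| * (θ ^ (r * β - 1) * exp (-(θ / ϑ) ^ r)) := by
    intro θ hθ
    rw [smul_eq_mul, ← rpow_mul (le_of_lt hθ), div_rpow (le_of_lt hθ) hϑ.le, inv_mul_eq_div,
      show r * β - 1 = (r - 1) + r * (β - 1) by ring, rpow_add hθ]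
    ring
  have h := integral_comp_rpow_Ioi (fun y => y ^ (β - 1) * exp (-((ϑ ^ r)⁻¹ * y))) hr
  rw [setIntegral_congr_fun measurableSet_Ioi hsubst, integral_const_mul,
    integral_rpow_mul_exp_neg_mul_Ioi hβ (by positivity), one_div, inv_inv,
    ← rpow_mul hϑ.le] at h
  rw [eq_div_iff (abs_ne_zero.mpr hr), ← h, mul_comm]

lemma ggPdf_of_nonpos {θ : ℝ} (hθ : θ ≤ 0) : ggPdf r β ϑ θ = 0 :=
  if_neg hθ.not_gt

lemma ggPdf_nonneg (hβ : 0 < β) (hϑ : 0 < ϑ) : 0 ≤ ggPdf r β ϑ := by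
  intro θ
  have := Gamma_pos_of_pos hβ
  unfold ggPdf
  split_ifs <;> positivity

lemma ggPdf_pos (hr : r ≠ 0) (hβ : 0 < β) (hϑ : 0 < ϑ) {θ : ℝ} (hθ : 0 < θ) :
    0 < ggPdf r β ϑ θ := by
  rw [ggPdf, if_pos hθ]
  have := Gamma_pos_of_pos hβ
  have := abs_pos.mpr hr
  positivity

@[fun_prop]
lemma measurable_ggPdf : Measurable (ggPdf r β ϑ) :=
  Measurable.ite measurableSet_Ioi (by fun_prop) measurable_const

lemma integral_ggPdf (hr : r ≠ 0) (hβ : 0 < β) (hϑ : 0 < ϑ) : ∫ θ, ggPdf r β ϑ θ = 1 := by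
  rw [← setIntegral_eq_integral_of_forall_compl_eq_zero (s := Ioi 0)
      fun θ hθ => ggPdf_of_nonpos (not_lt.mp hθ),
    setIntegral_congr_fun measurableSet_Ioi fun θ (hθ : 0 < θ) => by
      rw [ggPdf, if_pos hθ, mul_assoc],
    integral_const_mul, integral_rpow_mul_exp_neg_div_rpow hr hβ hϑ]
  have := Gamma_pos_of_pos hβ
  have := abs_pos.mpr hr
  field_simp

lemma integrable_ggPdf (hr : r ≠ 0) (hβ : 0 < β) (hϑ : 0 < ϑ) : Integrable (ggPdf r β ϑ) :=
  .of_integral_ne_zero (by rw [integral_ggPdf hr hβ hϑ]; exact one_ne_zero)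

noncomputable def ggMeasure (r β ϑ : ℝ) : Measure ℝ :=
  volume.withDensity fun θ => ENNReal.ofReal (ggPdf r β ϑ θ)

lemma isProbabilityMeasure_ggMeasure (hr : r ≠ 0) (hβ : 0 < β) (hϑ : 0 < ϑ) :
    IsProbabilityMeasure (ggMeasure r β ϑ) := by
  constructor
  rw [ggMeasure, withDensity_apply _ MeasurableSet.univ, Measure.restrict_univ,
    ← ofReal_integral_eq_lintegral_ofReal (integrable_ggPdf hr hβ hϑ)
      (ae_of_all _ (ggPdf_nonneg hβ hϑ)), integral_ggPdf hr hβ hϑ, ENNReal.ofReal_one]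

lemma ggMeasure_Iic_zero : ggMeasure r β ϑ (Iic 0) = 0 := by
  rw [ggMeasure, withDensity_apply _ measurableSet_Iic]
  exact setLIntegral_eq_zero measurableSet_Iic fun θ (hθ : θ ≤ 0) => by
    simp [ggPdf_of_nonpos hθ]

lemma continuous_cdfFn_ggMeasure (hr : r ≠ 0) (hβ : 0 < β) (hϑ : 0 < ϑ) :
    Continuous (cdfFn (ggMeasure r β ϑ)) :=
  continuous_cdfFn_withDensity_ofReal (integrable_ggPdf hr hβ hϑ) (ggPdf_nonneg hβ hϑ)

lemma strictMonoOn_cdfFn_ggMeasure (hr : r ≠ 0) (hβ : 0 < β) (hϑ : 0 < ϑ) :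
    StrictMonoOn (cdfFn (ggMeasure r β ϑ)) (Ici 0) := fun _ ha _ _ hab =>
  cdfFn_withDensity_ofReal_lt (integrable_ggPdf hr hβ hϑ) (ggPdf_nonneg hβ hϑ) hab
    fun _ hx => ggPdf_pos hr hβ hϑ (lt_of_le_of_lt ha hx.1)

theorem map_invFun_cdfFn_comp_cdfFn_ggMeasure (hr : r ≠ 0) (hβ : 0 < β) (hϑ : 0 < ϑ) :
    (ggMeasure r β ϑ).map
        (Function.invFun (cdfFn (gaussianReal 0 1)) ∘ cdfFn (ggMeasure r β ϑ))
      = gaussianReal 0 1 :=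
  have := isProbabilityMeasure_ggMeasure hr hβ hϑ
  map_invFun_cdfFn_comp_cdfFn ggMeasure_Iic_zero (continuous_cdfFn_ggMeasure hr hβ hϑ)
    (strictMonoOn_cdfFn_ggMeasure hr hβ hϑ) (continuous_cdfFn_gaussianReal one_ne_zero)
    (strictMono_cdfFn_gaussianReal one_ne_zero)

end GeneralizedGamma

section SBLPrior

variable {r β ϑ : ℝ}

noncomputable def sblMeasure (r β ϑ : ℝ) : Measure (ℝ × ℝ) :=
  volume.withDensity fun p => ENNReal.ofReal (sblPdf r β ϑ p.1 p.2)

lemma sblPdf_of_nonpos {x θ : ℝ} (hθ : θ ≤ 0) : sblPdf r β ϑ x θ = 0 :=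
  if_neg hθ.not_gt

lemma sblPdf_eq_gaussianPDFReal_mul_ggPdf {x θ : ℝ} (hθ : 0 < θ) :
    sblPdf r β ϑ x θ = gaussianPDFReal 0 θ.toNNReal x * ggPdf r β ϑ θ := by
  rw [sblPdf, if_pos hθ, gaussianPDFReal, Real.coe_toNNReal θ hθ.le, sub_zero,
    Real.rpow_neg (by positivity), Real.sqrt_eq_rpow, one_div]

lemma measurable_sblPdf : Measurable fun p : ℝ × ℝ => sblPdf r β ϑ p.1 p.2 :=
  Measurable.ite (measurableSet_lt measurable_const measurable_snd) (by fun_prop)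
    measurable_const

theorem lintegral_sblMeasure {f : ℝ × ℝ → ℝ≥0∞} (hf : Measurable f) :
    ∫⁻ p, f p ∂sblMeasure r β ϑ
      = ∫⁻ θ, ∫⁻ x, f (x, θ) ∂gaussianReal 0 θ.toNNReal ∂ggMeasure r β ϑ := by
  rw [sblMeasure, lintegral_withDensity_eq_lintegral_mul _ measurable_sblPdf.ennreal_ofReal hf,
    Measure.volume_eq_prod, lintegral_prod_symm' _ (measurable_sblPdf.ennreal_ofReal.mul hf),
    ggMeasure, lintegral_withDensity_eq_lintegral_mul_non_measurable _
      measurable_ggPdf.ennreal_ofReal (ae_of_all _ fun _ => ENNReal.ofReal_lt_top)]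
  refine lintegral_congr fun θ => ?_
  simp only [Pi.mul_apply]
  rcases le_or_gt θ 0 with hθ | hθ
  · simp [sblPdf_of_nonpos hθ, ggPdf_of_nonpos hθ]
  · have hfθ : Measurable fun x => f (x, θ) := hf.comp measurable_prodMk_right
    rw [gaussianReal_of_var_ne_zero _ (Real.toNNReal_pos.mpr hθ).ne',
      lintegral_withDensity_eq_lintegral_mul _ (measurable_gaussianPDF _ _) hfθ,
      ← lintegral_const_mul _ ((measurable_gaussianPDF _ _).mul hfθ)]
    refine lintegral_congr fun x => ?_
    simp only [Pi.mul_apply, sblPdf_eq_gaussianPDFReal_mul_ggPdf hθ, gaussianPDF,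
      ENNReal.ofReal_mul (gaussianPDFReal_nonneg _ _ _)]
    ring

end SBLPrior

theorem KR_map_pushforward (r β ϑ : ℝ) (hr : r ≠ 0) (hβ : 0 < β) (hϑ : 0 < ϑ)
    (μ : Measure (ℝ × ℝ))
    (hμ : μ = volume.withDensity (fun p => ENNReal.ofReal (sblPdf r β ϑ p.1 p.2)))
    (sθ : ℝ → ℝ)
    (hsθ : sθ = Function.invFun (cdfFn (gaussianReal 0 1)) ∘
        cdfFn (volume.withDensity (fun θ => ENNReal.ofReal (ggPdf r β ϑ θ))))
    (s : ℝ × ℝ → ℝ × ℝ)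
    (hs : s = fun p => if 0 < p.2 then (sθ p.2, p.1 / Real.sqrt p.2) else (0, 0)) :
    μ.map s
      = volume.withDensity
          (fun q => ENNReal.ofReal ((2 * π)⁻¹ * Real.exp (-(q.1 ^ 2 + q.2 ^ 2) / 2))) := by
  change μ = sblMeasure r β ϑ at hμ
  change sθ = _ ∘ cdfFn (ggMeasure r β ϑ) at hsθ
  have hsθ_meas : Measurable sθ := hsθ ▸
    (measurable_invFun_cdfFn (continuous_cdfFn_gaussianReal one_ne_zero)
      (strictMono_cdfFn_gaussianReal one_ne_zero)).comp
      (continuous_cdfFn_ggMeasure hr hβ hϑ).measurable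
  have hs_meas : Measurable s := hs ▸ Measurable.ite
    (measurableSet_lt measurable_const measurable_snd) (by fun_prop) measurable_const
  rw [← gaussianReal_prod_gaussianReal, hμ]
  refine Measure.ext_of_lintegral _ fun g hg => ?_
  calc ∫⁻ q, g q ∂(sblMeasure r β ϑ).map s
      = ∫⁻ θ, ∫⁻ x, g (s (x, θ)) ∂gaussianReal 0 θ.toNNReal ∂ggMeasure r β ϑ := by
        rw [lintegral_map hg hs_meas,
          lintegral_sblMeasure (f := fun p => g (s p)) (hg.comp hs_meas)]
    _ = ∫⁻ θ, ∫⁻ u, g (sθ θ, u) ∂gaussianReal 0 1 ∂ggMeasure r β ϑ :=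
        lintegral_congr_ae <| (ae_gt_of_measure_Iic_eq_zero ggMeasure_Iic_zero).mono fun θ hθ => by
          simp only [hs, if_pos hθ]
          exact lintegral_gaussianReal_comp_div_sqrt (g := fun u => g (sθ θ, u)) hθ
            (hg.comp measurable_prodMk_left)
    _ = ∫⁻ τ, ∫⁻ u, g (τ, u) ∂gaussianReal 0 1 ∂(ggMeasure r β ϑ).map sθ :=
        (lintegral_map hg.lintegral_prod_right' hsθ_meas).symm
    _ = ∫⁻ q, g q ∂(gaussianReal 0 1).prod (gaussianReal 0 1) := by
        rw [hsθ, map_invFun_cdfFn_comp_cdfFn_ggMeasure hr hβ hϑ,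
          lintegral_prod _ hg.aemeasurable]
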